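/- Let λ be a partition, n ≥ 1, and j an index with λ_j = λ_{j+1}. For every σ ∈ Tab(λ,n) whose columns j and j+1 are not identical, quinv(τ_j(σ)) = quinv(σ) + 1 or quinv(τ_j(σ)) = quinv(σ) − 1 (i.e., |quinv(τ_j(σ)) − quinv(σ)| = 1). -/

import Mathlib

open scoped Classical

noncomputable section

namespace MacQuinv

/-- Height of column `j` (0-indexed) of the diagram of `lam`. -/
def colHt (lam : List ℕ) (j : ℕ) : ℕ := lam.getD j 0

/-- The diagram `dg(λ)`: cells `(r, j)` with `1 ≤ r ≤ λ_j` (row `r` counted from the bottom)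
and `j` a (0-indexed) column index. -/
def dg (lam : List ℕ) : Finset (ℕ × ℕ) :=
  (Finset.Icc 1 (lam.foldr max 0) ×ˢ Finset.range lam.length).filter
    fun u => u.1 ≤ colHt lam u.2

abbrev Cell (lam : List ℕ) := {u : ℕ × ℕ // u ∈ dg lam}

/-- A filling of `dg(λ)` with entries in `{1,…,n}` (encoded via `Fin n`: entry = value + 1).
`Tab(λ,n)` is the set of all such fillings. -/
abbrev Filling (lam : List ℕ) (n : ℕ) := Cell lam → Fin n

/-- The entry of `σ` at a cell `u`, an element of `{1,…,n}` for `u ∈ dg(λ)`,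
and `0` outside of the diagram. -/
def ent {lam : List ℕ} {n : ℕ} (σ : Filling lam n) (u : ℕ × ℕ) : ℕ :=
  if h : u ∈ dg lam then (σ ⟨u, h⟩ : ℕ) + 1 else 0

/-- `leg(u)` = number of cells above `u` in its column. -/
def leg (lam : List ℕ) (u : ℕ × ℕ) : ℕ := colHt lam u.2 - u.1

/-- Descents: cells `u` in rows `r ≥ 2` with `σ(u) > σ(South(u))`. -/
def Des {lam : List ℕ} {n : ℕ} (σ : Filling lam n) : Finset (ℕ × ℕ) :=
  (dg lam).filter fun u => 2 ≤ u.1 ∧ ent σ (u.1 - 1, u.2) < ent σ u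

def maj {lam : List ℕ} {n : ℕ} (σ : Filling lam n) : ℕ :=
  ∑ u ∈ Des σ, (leg lam u + 1)

/-- The quinv-orientation condition on entries `a` (above `b`), `b`, `c` (same row as `b`,
to its right): counterclockwise when read in increasing order. -/
def QEnt (a b c : ℕ) : Prop :=
  (a ≤ b ∧ b < c) ∨ (b < c ∧ c < a) ∨ (c < a ∧ a ≤ b)

/-- L-triples of `dg(λ)`, encoded by their two bottom cells `(y, z)`: `y = (r,i)`, `z = (r,j)`
with `i < j`.  The top cell is the cell `(r+1, i)` above `y` when it is in the diagram
(non-degenerate case); when `λ_i = r` the triple is degenerate. -/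
def Ltriples (lam : List ℕ) : Finset ((ℕ × ℕ) × (ℕ × ℕ)) :=
  ((dg lam) ×ˢ (dg lam)).filter fun p => p.1.1 = p.2.1 ∧ p.1.2 < p.2.2

/-- Whether the L-triple with bottom cells `y, z` is a quinv triple of `σ`.  (In the
degenerate case the entry of the missing top cell is `0`, which makes the condition reduce
to `σ(y) < σ(z)`, as required.) -/
def QuinvTriple {lam : List ℕ} {n : ℕ} (σ : Filling lam n) (y z : ℕ × ℕ) : Prop :=
  QEnt (ent σ (y.1 + 1, y.2)) (ent σ y) (ent σ z)

def quinv {lam : List ℕ} {n : ℕ} (σ : Filling lam n) : ℕ :=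
  ((Ltriples lam).filter fun p => QuinvTriple σ p.1 p.2).card

/-- The content monomial `x^σ = ∏_{u ∈ dg(λ)} x_{σ(u)}`. -/
def xmon {lam : List ℕ} {n : ℕ} (R : Type) [CommSemiring R] (σ : Filling lam n) :
    MvPolynomial (Fin n) R :=
  ∏ u : Cell lam, MvPolynomial.X (σ u)


/-- The list of entries of column `j` of `σ`, from bottom (row 1) to top. -/
def columnOf {lam : List ℕ} {n : ℕ} (σ : Filling lam n) (j : ℕ) : List ℕ :=
  (List.range (colHt lam j)).map fun r => ent σ (r + 1, j)

/-- The topmost row at which columns `j` and `j'` of `σ` differ (for columns of equal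
height; `0` if the columns agree everywhere). -/
def topDiff {lam : List ℕ} {n : ℕ} (σ : Filling lam n) (j j' : ℕ) : ℕ :=
  sSup {r : ℕ | r ∈ Finset.Icc 1 (colHt lam j) ∧ ent σ (r, j) ≠ ent σ (r, j')}

/-- The order on (unequal, equal-height) columns: column `jA` is greater than column `jB`
if, at the topmost row `r` where they differ, the cells of `a_{r+1}, a_r, b_r` form a quinv
triple (`a` = entries of column `jA`, `b` = entries of column `jB`; when `r` is the top row,
the entry above is `0` by convention). -/
def ColGT {lam : List ℕ} {n : ℕ} (σ : Filling lam n) (jA jB : ℕ) : Prop :=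
  QEnt (ent σ (topDiff σ jA jB + 1, jA)) (ent σ (topDiff σ jA jB, jA))
    (ent σ (topDiff σ jA jB, jB))

/-- `σ` is quinv-sorted: for any two columns of equal height, the one on the left is not
greater than the one on the right; equivalently for positions `j < j'`, either the two
columns are equal or the column at `j'` is the greater one. -/
def QuinvSorted {lam : List ℕ} {n : ℕ} (σ : Filling lam n) : Prop :=
  ∀ j j' : ℕ, j < j' → j' < lam.length → colHt lam j = colHt lam j' →
    columnOf σ j = columnOf σ j' ∨ ColGT σ j' j

/-- The `t`-integer `[m]_t = 1 + t + ⋯ + t^{m-1}`, in `ℤ[q,t]` realized as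
`Polynomial (Polynomial ℤ)` with `t` the outer variable and `q` the inner one. -/
def tInt (m : ℕ) : Polynomial (Polynomial ℤ) :=
  ∑ i ∈ Finset.range m, Polynomial.X ^ i

/-- The `t`-factorial `[m]_t!`. -/
def tFact : ℕ → Polynomial (Polynomial ℤ)
  | 0 => 1
  | m + 1 => tInt (m + 1) * tFact m

/-- `perm(σ)`: the product over all heights `i` of the `t`-multinomial coefficient
`[m_1 + ⋯ + m_k choose m_1, …, m_k]_t`, where `m_1, …, m_k` are the multiplicities of the
distinct columns among the columns of `σ` of height `i`.  The `t`-multinomial (a polynomial)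
is realized as the exact division `[m_1+⋯+m_k]_t! / ([m_1]_t! ⋯ [m_k]_t!)`, computed with
`Polynomial.divByMonic` (the divisor is monic). -/
def permCoeff {lam : List ℕ} {n : ℕ} (σ : Filling lam n) : Polynomial (Polynomial ℤ) :=
  ∏ i ∈ Finset.Icc 1 (lam.foldr max 0),
    Polynomial.divByMonic
      (tFact ((Finset.range lam.length).filter fun j => colHt lam j = i).card)
      (∏ c ∈ ((Finset.range lam.length).filter fun j => colHt lam j = i).image
          (fun j => columnOf σ j),
        tFact ((Finset.range lam.length).filter
          fun j => colHt lam j = i ∧ columnOf σ j = c).card)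


/-- The cell obtained by reflecting a cell of columns `j`, `j+1` into the other column. -/
def mirror (j : ℕ) (u : ℕ × ℕ) : ℕ × ℕ :=
  if u.2 = j then (u.1, j + 1) else if u.2 = j + 1 then (u.1, j) else u

/-- Whether swapping the entries of row `i` between columns `j` and `j+1` changes the
quinv status of the L-triple on the cells `((i,j), (i-1,j), (i-1,j+1))`. -/
def SwapChanges {lam : List ℕ} {n : ℕ} (σ : Filling lam n) (j i : ℕ) : Prop :=
  ¬ (QEnt (ent σ (i, j)) (ent σ (i - 1, j)) (ent σ (i - 1, j + 1)) ↔
      QEnt (ent σ (i, j + 1)) (ent σ (i - 1, j)) (ent σ (i - 1, j + 1)))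

/-- `SwapDown σ j ℓ d` holds iff the iterative swapping of `τ_j`, started at row `ℓ`,
reaches row `ℓ - d`:  row `ℓ` is swapped, and row `i - 1` is swapped iff row `i` is swapped
and swapping row `i` changes the quinv status of the triple at rows `i, i-1`. -/
def SwapDown {lam : List ℕ} {n : ℕ} (σ : Filling lam n) (j ℓ : ℕ) : ℕ → Prop
  | 0 => True
  | d + 1 => SwapDown σ j ℓ d ∧ SwapChanges σ j (ℓ - d)

/-- Row `r` gets swapped by `τ_j`: columns `j`, `j+1` are not identical, `1 ≤ r ≤ ℓ`
(where `ℓ` is the topmost row where the two columns differ), and the iterative swapping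
propagates from row `ℓ` all the way down to row `r`. -/
def Swapped {lam : List ℕ} {n : ℕ} (σ : Filling lam n) (j : ℕ) (r : ℕ) : Prop :=
  columnOf σ j ≠ columnOf σ (j + 1) ∧ 1 ≤ r ∧ r ≤ topDiff σ j (j + 1) ∧
    SwapDown σ j (topDiff σ j (j + 1)) (topDiff σ j (j + 1) - r)

/-- The operator `τ_j` (for `λ_j = λ_{j+1}`): it exchanges, between columns `j` and `j+1`,
the entries of exactly the rows selected by `Swapped`, and leaves everything else unchanged. -/
def tauj {lam : List ℕ} {n : ℕ} (j : ℕ) (σ : Filling lam n) : Filling lam n :=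
  fun u =>
    if (u.1.2 = j ∨ u.1.2 = j + 1) ∧ Swapped σ j u.1.1 then
      if h : mirror j u.1 ∈ dg lam then σ ⟨mirror j u.1, h⟩ else σ u
    else σ u

/-- The multiset of entries of `σ` in row `r`. -/
def rowMultiset {lam : List ℕ} {n : ℕ} (σ : Filling lam n) (r : ℕ) : Multiset ℕ :=
  ((dg lam).filter fun u => u.1 = r).val.map (ent σ)

/-!
Write `quinv` as a sum of `0/1` indicators over the L-triples, and let `ℓ` be the topmost row
where columns `j` and `j+1` differ.  On each row it swaps, `τ_j` permutes the entries by the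
transposition `(j j+1)` of columns, and the swapped rows form an interval ending at `ℓ`.  The
transposition pairs every L-triple not of the form `((r,j),(r,j+1))` with a partner, and the
indicator sum over each pair is unchanged: the only delicate case is an unswapped row `r` below a
swapped row `r+1`, where by construction the swap at `r+1` does not change the status of the
triple `(r+1,j),(r,j),(r,j+1)`, and this is exactly what balances the four triples with tops in
row `r+1` and bottoms in row `r` (`qInd_exchange`).  For the same reason the triples
`((r,j),(r,j+1))` with `r ≠ ℓ` keep their status, while at `r = ℓ` the two distinct bottom entries
are exchanged under equal top entries, which flips the status.
-/
theorem _root_.Finset.sum_eq_sum_of_involution {ι : Type*} {s : Finset ι} {f g : ι → ℤ}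
    (m : ι → ι) (hmaps : ∀ a ∈ s, m a ∈ s) (hinv : ∀ a ∈ s, m (m a) = a)
    (h : ∀ a ∈ s, f a + f (m a) = g a + g (m a)) :
    ∑ a ∈ s, f a = ∑ a ∈ s, g a := by
  rw [← sub_eq_zero, ← Finset.sum_sub_distrib]
  refine Finset.sum_involution (fun a _ => m a) (fun a ha => by linarith [h a ha])
    (fun a ha hne hfix => hne ?_) hmaps hinv
  have := h a ha
  rw [hfix] at this
  omega

def qInd (a b c : ℕ) : ℤ := if QEnt a b c then 1 else 0

lemma qInd_eq_zero_or_one (a b c : ℕ) : qInd a b c = 0 ∨ qInd a b c = 1 := by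
  unfold qInd; split_ifs <;> simp

lemma qInd_add_qInd_swap {a b c : ℕ} (h : b ≠ c) : qInd a b c + qInd a c b = 1 := by
  unfold qInd QEnt; split_ifs <;> omega

lemma qInd_exchange {a a' b b' c : ℕ} (h : QEnt a b b' ↔ QEnt a' b b') :
    qInd a' b c + qInd a b' c = qInd a b c + qInd a' b' c := by
  unfold qInd QEnt at *; split_ifs <;> omega

lemma qEnt_swap_iff_of_not_iff {a a' b b' : ℕ} (h : ¬(QEnt a b b' ↔ QEnt a' b b')) :
    QEnt a' b' b ↔ QEnt a b b' := by
  unfold QEnt at *; omega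

def quinvInd {lam : List ℕ} {n : ℕ} (σ : Filling lam n) (y z : ℕ × ℕ) : ℤ :=
  qInd (ent σ (y.1 + 1, y.2)) (ent σ y) (ent σ z)

lemma quinv_eq_sum {lam : List ℕ} {n : ℕ} (σ : Filling lam n) :
    (quinv σ : ℤ) = ∑ p ∈ Ltriples lam, quinvInd σ p.1 p.2 := by
  rw [quinv, Finset.card_filter]
  push_cast
  rfl

lemma colHt_le_foldr_max (lam : List ℕ) (j : ℕ) : colHt lam j ≤ lam.foldr max 0 := by
  induction lam generalizing j with
  | nil => simp [colHt]
  | cons a t ih =>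
    cases j with
    | zero => simp [colHt]
    | succ j => exact (ih j).trans (le_max_right _ _)

lemma mem_dg {lam : List ℕ} {r i : ℕ} :
    (r, i) ∈ dg lam ↔ 1 ≤ r ∧ i < lam.length ∧ r ≤ colHt lam i := by
  simp only [dg, Finset.mem_filter, Finset.mem_product, Finset.mem_Icc, Finset.mem_range]
  have := colHt_le_foldr_max lam i
  constructor
  · rintro ⟨⟨⟨h1, -⟩, h2⟩, h3⟩; exact ⟨h1, h2, h3⟩
  · rintro ⟨h1, h2, h3⟩; exact ⟨⟨⟨h1, by omega⟩, h2⟩, h3⟩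

lemma mem_Ltriples {lam : List ℕ} {r r' i k : ℕ} :
    ((r, i), (r', k)) ∈ Ltriples lam ↔ (r, i) ∈ dg lam ∧ (r', k) ∈ dg lam ∧ r = r' ∧ i < k := by
  simp only [Ltriples, Finset.mem_filter, Finset.mem_product, and_assoc]

lemma mirror_eq (j r i : ℕ) : mirror j (r, i) = (r, Equiv.swap j (j + 1) i) := by
  unfold mirror
  rw [Equiv.swap_apply_def]
  split_ifs <;> simp_all

lemma swap_lt_swap_of_not_adjacent {j i k : ℕ} (hik : i < k) (h : ¬(i = j ∧ k = j + 1)) :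
    Equiv.swap j (j + 1) i < Equiv.swap j (j + 1) k ∧
      ¬(Equiv.swap j (j + 1) i = j ∧ Equiv.swap j (j + 1) k = j + 1) := by
  simp only [Equiv.swap_apply_def]
  split_ifs <;> omega

section Tauj

variable {lam : List ℕ} {n : ℕ} {σ : Filling lam n} {j : ℕ}

lemma swap_mem_dg_iff (hj : j + 1 < lam.length) (hcol : colHt lam j = colHt lam (j + 1))
    (r i : ℕ) : (r, Equiv.swap j (j + 1) i) ∈ dg lam ↔ (r, i) ∈ dg lam := by
  rw [mem_dg, mem_dg, Equiv.swap_apply_def]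
  split_ifs <;> subst_vars <;> omega

lemma ent_tauj (hj : j + 1 < lam.length) (hcol : colHt lam j = colHt lam (j + 1)) (r i : ℕ) :
    ent (tauj j σ) (r, i) =
      if Swapped σ j r then ent σ (r, Equiv.swap j (j + 1) i) else ent σ (r, i) := by
  by_cases hi : i = j ∨ i = j + 1
  · by_cases hmem : (r, i) ∈ dg lam
    · have hmem' := (swap_mem_dg_iff hj hcol r i).mpr hmem
      simp only [ent, tauj, mirror_eq, dif_pos hmem, dif_pos hmem', hi, true_and]
      split_ifs <;> rfl
    · have hmem' := mt (swap_mem_dg_iff hj hcol r i).mp hmem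
      simp only [ent, dif_neg hmem, dif_neg hmem', ite_self]
  · rw [Equiv.swap_apply_of_ne_of_ne (fun h => hi (Or.inl h)) (fun h => hi (Or.inr h)), ite_self]
    unfold ent tauj
    simp only [hi, false_and, if_false]

lemma topDiff_spec (hcol : colHt lam j = colHt lam (j + 1))
    (hne : columnOf σ j ≠ columnOf σ (j + 1)) :
    1 ≤ topDiff σ j (j + 1) ∧ topDiff σ j (j + 1) ≤ colHt lam j ∧
      ent σ (topDiff σ j (j + 1), j) ≠ ent σ (topDiff σ j (j + 1), j + 1) := by
  set S := {r : ℕ | r ∈ Finset.Icc 1 (colHt lam j) ∧ ent σ (r, j) ≠ ent σ (r, j + 1)}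
  have hbdd : BddAbove S := ⟨colHt lam j, fun r hr => (Finset.mem_Icc.mp hr.1).2⟩
  have hnonempty : S.Nonempty := by
    by_contra hS
    refine hne ?_
    unfold columnOf
    rw [← hcol]
    refine List.map_congr_left fun r hr => ?_
    by_contra hd
    exact hS ⟨r + 1, Finset.mem_Icc.mpr ⟨by omega, by simpa using hr⟩, hd⟩
  obtain ⟨hmem, hdiff⟩ := Nat.sSup_mem hnonempty hbdd
  exact ⟨(Finset.mem_Icc.mp hmem).1, (Finset.mem_Icc.mp hmem).2, hdiff⟩

lemma ent_swap_of_topDiff_lt (hcol : colHt lam j = colHt lam (j + 1)) {r : ℕ}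
    (hr : topDiff σ j (j + 1) < r) (i : ℕ) :
    ent σ (r, Equiv.swap j (j + 1) i) = ent σ (r, i) := by
  have hrow : ent σ (r, j) = ent σ (r, j + 1) := by
    by_cases hrm : r ≤ colHt lam j
    · by_contra hd
      have : r ≤ topDiff σ j (j + 1) :=
        le_csSup ⟨colHt lam j, fun r hr => (Finset.mem_Icc.mp hr.1).2⟩
          ⟨Finset.mem_Icc.mpr ⟨by omega, hrm⟩, hd⟩
      omega
    · have h1 : (r, j) ∉ dg lam := by rw [mem_dg]; omega
      have h2 : (r, j + 1) ∉ dg lam := by rw [mem_dg]; omega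
      simp only [ent, dif_neg h1, dif_neg h2]
  rw [Equiv.swap_apply_def]
  split_ifs <;> simp_all

lemma swapChanges_succ_iff (r : ℕ) : SwapChanges σ j (r + 1) ↔
    ¬(QEnt (ent σ (r + 1, j)) (ent σ (r, j)) (ent σ (r, j + 1)) ↔
      QEnt (ent σ (r + 1, j + 1)) (ent σ (r, j)) (ent σ (r, j + 1))) := by
  rw [SwapChanges, Nat.add_sub_cancel]

lemma swapped_iff_succ (hne : columnOf σ j ≠ columnOf σ (j + 1)) {r : ℕ} (hr : 1 ≤ r) :
    Swapped σ j r ↔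
      r = topDiff σ j (j + 1) ∨ (Swapped σ j (r + 1) ∧ SwapChanges σ j (r + 1)) := by
  rcases lt_trichotomy r (topDiff σ j (j + 1)) with hlt | rfl | hgt
  · have hd : topDiff σ j (j + 1) - r = topDiff σ j (j + 1) - (r + 1) + 1 := by omega
    have hrow : topDiff σ j (j + 1) - (topDiff σ j (j + 1) - (r + 1)) = r + 1 := by omega
    simp only [Swapped, hd, SwapDown, hrow]
    constructor
    · rintro ⟨h1, -, -, h4, h5⟩
      exact Or.inr ⟨⟨h1, by omega, by omega, h4⟩, h5⟩
    · rintro (h | ⟨⟨h1, -, -, h4⟩, h5⟩)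
      · omega
      · exact ⟨h1, hr, hlt.le, h4, h5⟩
  · simp [Swapped, SwapDown, hne, hr]
  · simp only [Swapped]
    omega

lemma swapped_topDiff (hcol : colHt lam j = colHt lam (j + 1))
    (hne : columnOf σ j ≠ columnOf σ (j + 1)) : Swapped σ j (topDiff σ j (j + 1)) :=
  (swapped_iff_succ hne (topDiff_spec hcol hne).1).mpr (Or.inl rfl)

lemma not_swapped_of_topDiff_lt {r : ℕ} (hr : topDiff σ j (j + 1) < r) : ¬Swapped σ j r :=
  fun h => by have := h.2.2.1; omega

lemma quinvInd_tauj_add_quinvInd_topDiff (hj : j + 1 < lam.length)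
    (hcol : colHt lam j = colHt lam (j + 1)) (hne : columnOf σ j ≠ columnOf σ (j + 1)) :
    quinvInd (tauj j σ) (topDiff σ j (j + 1), j) (topDiff σ j (j + 1), j + 1) +
      quinvInd σ (topDiff σ j (j + 1), j) (topDiff σ j (j + 1), j + 1) = 1 := by
  simp only [quinvInd, ent_tauj hj hcol, if_pos (swapped_topDiff hcol hne),
    if_neg (not_swapped_of_topDiff_lt (Nat.lt_succ_self _)), Equiv.swap_apply_left,
    Equiv.swap_apply_right]
  exact qInd_add_qInd_swap (topDiff_spec hcol hne).2.2.symm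

lemma quinvInd_tauj_of_ne_topDiff (hj : j + 1 < lam.length)
    (hcol : colHt lam j = colHt lam (j + 1)) (hne : columnOf σ j ≠ columnOf σ (j + 1)) {r : ℕ}
    (hr : 1 ≤ r) (hrℓ : r ≠ topDiff σ j (j + 1)) :
    quinvInd (tauj j σ) (r, j) (r, j + 1) = quinvInd σ (r, j) (r, j + 1) := by
  have hsucc := swapped_iff_succ hne hr
  rw [swapChanges_succ_iff] at hsucc
  simp only [quinvInd, ent_tauj hj hcol, Equiv.swap_apply_left, Equiv.swap_apply_right]
  by_cases h0 : Swapped σ j r <;> by_cases h1 : Swapped σ j (r + 1) <;>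
    simp only [h0, h1, hrℓ, if_true, if_false, true_iff, false_iff, true_and, false_and,
      false_or, or_false, not_not] at hsucc ⊢
  · simp only [qInd, qEnt_swap_iff_of_not_iff hsucc]
  · simp only [qInd, hsucc]

lemma quinvInd_tauj_add_swap (hj : j + 1 < lam.length) (hcol : colHt lam j = colHt lam (j + 1))
    (hne : columnOf σ j ≠ columnOf σ (j + 1)) {r i k : ℕ} (hr : 1 ≤ r) (hik : i < k)
    (hadj : ¬(i = j ∧ k = j + 1)) :
    quinvInd (tauj j σ) (r, i) (r, k) +
        quinvInd (tauj j σ) (r, Equiv.swap j (j + 1) i) (r, Equiv.swap j (j + 1) k) =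
      quinvInd σ (r, i) (r, k) +
        quinvInd σ (r, Equiv.swap j (j + 1) i) (r, Equiv.swap j (j + 1) k) := by
  simp only [quinvInd, ent_tauj hj hcol, Equiv.swap_apply_self]
  by_cases h0 : Swapped σ j r <;> by_cases h1 : Swapped σ j (r + 1) <;>
    simp only [h0, h1, if_true, if_false]
  · exact add_comm _ _
  · have hrℓ : r = topDiff σ j (j + 1) :=
      ((swapped_iff_succ hne hr).mp h0).resolve_right fun h => h1 h.1
    have habove : topDiff σ j (j + 1) < r + 1 := by omega
    simp only [ent_swap_of_topDiff_lt hcol habove]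
    exact add_comm _ _
  · have hkeep : ¬SwapChanges σ j (r + 1) :=
      fun hc => h0 ((swapped_iff_succ hne hr).mpr (Or.inr ⟨h1, hc⟩))
    rw [swapChanges_succ_iff, not_not] at hkeep
    by_cases hij : i = j ∨ i = j + 1
    · have hk : Equiv.swap j (j + 1) k = k := Equiv.swap_apply_of_ne_of_ne (by omega) (by omega)
      rcases hij with rfl | rfl
      · rw [Equiv.swap_apply_left, hk]
        exact qInd_exchange hkeep
      · rw [Equiv.swap_apply_right, hk]
        linarith [qInd_exchange (c := ent σ (r, k)) hkeep]
    · rw [Equiv.swap_apply_of_ne_of_ne (fun h => hij (Or.inl h)) (fun h => hij (Or.inr h))]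

lemma sum_quinvInd_tauj_of_not_adjacent (hj : j + 1 < lam.length)
    (hcol : colHt lam j = colHt lam (j + 1)) (hne : columnOf σ j ≠ columnOf σ (j + 1)) :
    ∑ p ∈ (Ltriples lam).filter (fun p => ¬(p.1.2 = j ∧ p.2.2 = j + 1)),
        quinvInd (tauj j σ) p.1 p.2 =
      ∑ p ∈ (Ltriples lam).filter (fun p => ¬(p.1.2 = j ∧ p.2.2 = j + 1)),
        quinvInd σ p.1 p.2 := by
  refine Finset.sum_eq_sum_of_involution (Prod.map (mirror j) (mirror j)) ?_ ?_ ?_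
  · rintro ⟨⟨r, i⟩, ⟨r', k⟩⟩ hp
    rw [Finset.mem_filter, mem_Ltriples] at hp
    obtain ⟨⟨hy, hz, rfl, hik⟩, hadj⟩ := hp
    obtain ⟨hlt, hadj'⟩ := swap_lt_swap_of_not_adjacent hik hadj
    simp only [Prod.map, mirror_eq, Finset.mem_filter, mem_Ltriples, swap_mem_dg_iff hj hcol,
      true_and]
    exact ⟨⟨hy, hz, hlt⟩, hadj'⟩
  · rintro ⟨⟨r, i⟩, ⟨r', k⟩⟩ -
    simp [mirror_eq]
  · rintro ⟨⟨r, i⟩, ⟨r', k⟩⟩ hp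
    rw [Finset.mem_filter, mem_Ltriples] at hp
    obtain ⟨⟨hy, -, rfl, hik⟩, hadj⟩ := hp
    simp only [Prod.map, mirror_eq]
    exact quinvInd_tauj_add_swap hj hcol hne (mem_dg.mp hy).1 hik hadj

lemma sum_quinvInd_tauj_sub_of_adjacent (hj : j + 1 < lam.length)
    (hcol : colHt lam j = colHt lam (j + 1)) (hne : columnOf σ j ≠ columnOf σ (j + 1)) :
    ∑ p ∈ (Ltriples lam).filter (fun p => p.1.2 = j ∧ p.2.2 = j + 1),
        (quinvInd (tauj j σ) p.1 p.2 - quinvInd σ p.1 p.2) =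
      quinvInd (tauj j σ) (topDiff σ j (j + 1), j) (topDiff σ j (j + 1), j + 1) -
        quinvInd σ (topDiff σ j (j + 1), j) (topDiff σ j (j + 1), j + 1) := by
  obtain ⟨h1, h2, -⟩ := topDiff_spec hcol hne
  refine Finset.sum_eq_single_of_mem
    ((topDiff σ j (j + 1), j), (topDiff σ j (j + 1), j + 1)) ?_ ?_
  · simp only [Finset.mem_filter, mem_Ltriples, mem_dg, true_and, and_true]
    omega
  · rintro ⟨⟨r, i⟩, ⟨r', k⟩⟩ hp hpℓ
    simp only [Finset.mem_filter, mem_Ltriples] at hp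
    obtain ⟨⟨hy, -, rfl, -⟩, rfl, rfl⟩ := hp
    rw [sub_eq_zero]
    exact quinvInd_tauj_of_ne_topDiff hj hcol hne (mem_dg.mp hy).1 fun h => hpℓ (by rw [h])

lemma quinv_tauj_sub_quinv (hj : j + 1 < lam.length) (hcol : colHt lam j = colHt lam (j + 1))
    (hne : columnOf σ j ≠ columnOf σ (j + 1)) :
    (quinv (tauj j σ) : ℤ) - quinv σ =
      quinvInd (tauj j σ) (topDiff σ j (j + 1), j) (topDiff σ j (j + 1), j + 1) -
        quinvInd σ (topDiff σ j (j + 1), j) (topDiff σ j (j + 1), j + 1) := by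
  rw [quinv_eq_sum, quinv_eq_sum, ← Finset.sum_sub_distrib,
    ← Finset.sum_filter_add_sum_filter_not _ (fun p => p.1.2 = j ∧ p.2.2 = j + 1),
    sum_quinvInd_tauj_sub_of_adjacent hj hcol hne, Finset.sum_sub_distrib,
    sum_quinvInd_tauj_of_not_adjacent hj hcol hne, sub_self, add_zero]

end Tauj

theorem tauj_changes_quinv_by_one_general
    (lam : List ℕ)
    (n : ℕ) (j : ℕ) (hj : j + 1 < lam.length)
    (hcol : colHt lam j = colHt lam (j + 1)) (σ : Filling lam n)
    (hne : columnOf σ j ≠ columnOf σ (j + 1)) :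
    quinv (tauj j σ) = quinv σ + 1 ∨ quinv σ = quinv (tauj j σ) + 1 := by
  have hdiff := quinv_tauj_sub_quinv hj hcol hne
  have hflip := quinvInd_tauj_add_quinvInd_topDiff hj hcol hne
  have h01 : quinvInd σ (topDiff σ j (j + 1), j) (topDiff σ j (j + 1), j + 1) = 0 ∨
      quinvInd σ (topDiff σ j (j + 1), j) (topDiff σ j (j + 1), j + 1) = 1 :=
    qInd_eq_zero_or_one _ _ _
  omega

/-- for `λ_j = λ_{j+1}` and `σ` whose columns `j` and `j+1` are not identical,
`τ_j` changes `quinv` by exactly `1` (up or down). -/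
theorem tauj_changes_quinv_by_one
    (lam : List ℕ) (hdec : lam.Pairwise (· ≥ ·)) (hpos : ∀ m ∈ lam, 0 < m)
    (n : ℕ) (hn : 1 ≤ n) (j : ℕ) (hj : j + 1 < lam.length)
    (hcol : colHt lam j = colHt lam (j + 1)) (σ : Filling lam n)
    (hne : columnOf σ j ≠ columnOf σ (j + 1)) :
    quinv (tauj j σ) = quinv σ + 1 ∨ quinv σ = quinv (tauj j σ) + 1 :=
  tauj_changes_quinv_by_one_general lam n j hj hcol σ hne

end MacQuinv
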